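/- Let β₁₁(v) = (1/(3v²))·M(v)/A(v), where M(v) = 45360v² cos v + 16998v⁴ − 850v⁶ + 37v⁶ cos v − 90720 + 90720 cos v + 1902v⁴ cos v and A(v) = 15120 cos v − 15120 + 6900v² − 313v⁴ + 660v² cos v + 13v⁴ cos v. Then lim_{v→0} β₁₁(v) = 3665/3894. -/

import Mathlib

/-!
Replacing `cos v` by its Taylor polynomial of degree 12, whose error is `O(v ^ 14)`, the numerator
`M(v)` vanishes to order 12 and the denominator `A(v)` to order 10 at `v = 0`, with leading
coefficients `-733/44352` and `-59/10080`. Hence `β₁₁(v) = (M(v) / v ^ 12) / (3 * (A(v) / v ^ 10))`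
tends to `(-733/44352) / (3 * (-59/10080)) = 3665/3894`.
-/

open Filter Finset Topology
open scoped Nat

noncomputable def cosTaylor (n : ℕ) (x : ℝ) : ℝ :=
  ∑ k ∈ range n, (-1) ^ k * x ^ (2 * k) / (2 * k)!

theorem sum_range_two_mul_add_neg_pow_div_factorial {K : Type*} [Field K] (z : K) (n : ℕ) :
    ∑ m ∈ range (2 * n), (z ^ m / m ! + (-z) ^ m / m !) =
      2 * ∑ k ∈ range n, z ^ (2 * k) / (2 * k)! := by
  induction n with
  | zero => simp
  | succ n ih =>
    rw [mul_add, mul_one, sum_range_succ, sum_range_succ, ih, sum_range_succ,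
      Even.neg_pow (even_two_mul n), Odd.neg_pow (odd_two_mul_add_one n)]
    ring

theorem ofReal_cosTaylor (n : ℕ) (x : ℝ) :
    (cosTaylor n x : ℂ) = ∑ k ∈ range n, (x * Complex.I) ^ (2 * k) / (2 * k)! := by
  simp only [cosTaylor, Complex.ofReal_sum]
  refine sum_congr rfl fun k _ => ?_
  rw [mul_pow, pow_mul Complex.I, Complex.I_sq]
  push_cast
  ring

theorem add_one_le_factorial_mul_self {m : ℕ} (hm : 2 ≤ m) : m + 1 ≤ m ! * m := by
  nlinarith [Nat.self_le_factorial m]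

theorem abs_cos_sub_cosTaylor_le {x : ℝ} (hx : |x| ≤ 1) {n : ℕ} (hn : 0 < n) :
    |Real.cos x - cosTaylor n x| ≤ |x| ^ (2 * n) := by
  have hconst : ((2 * n).succ : ℝ) * (((2 * n)! : ℕ) * ((2 * n : ℕ) : ℝ))⁻¹ ≤ 1 := by
    rw [← div_eq_mul_inv, div_le_one (by positivity)]
    exact_mod_cast add_one_le_factorial_mul_self (by omega)
  have hexp (z : ℂ) (hz : ‖z‖ = |x|) :
      ‖Complex.exp z - ∑ m ∈ range (2 * n), z ^ m / m.factorial‖ ≤ |x| ^ (2 * n) := by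
    refine (Complex.exp_bound (hz.trans_le hx) (by omega)).trans ?_
    rw [hz]
    exact mul_le_of_le_one_right (by positivity) hconst
  have hsum := sum_range_two_mul_add_neg_pow_div_factorial ((x : ℂ) * Complex.I) n
  rw [sum_add_distrib] at hsum
  have key : ((Real.cos x - cosTaylor n x : ℝ) : ℂ) =
      ((Complex.exp (x * Complex.I) - ∑ m ∈ range (2 * n), (x * Complex.I) ^ m / m !) +
        (Complex.exp (-(x * Complex.I)) - ∑ m ∈ range (2 * n), (-(x * Complex.I)) ^ m / m !)) / 2 := by
    rw [Complex.ofReal_sub, Complex.ofReal_cos, Complex.cos, ofReal_cosTaylor, neg_mul]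
    linear_combination (1 / 2 : ℂ) * hsum
  rw [← Real.norm_eq_abs, ← Complex.norm_real, key, norm_div, Complex.norm_two]
  have h1 := hexp (x * Complex.I) (by simp)
  have h2 := hexp (-(x * Complex.I)) (by simp)
  linarith [norm_add_le
    (Complex.exp (x * Complex.I) - ∑ m ∈ range (2 * n), (x * Complex.I) ^ m / m !)
    (Complex.exp (-(x * Complex.I)) - ∑ m ∈ range (2 * n), (-(x * Complex.I)) ^ m / m !)]

theorem tendsto_cos_sub_cosTaylor_div_pow (n : ℕ) :
    Tendsto (fun x => (Real.cos x - cosTaylor (n + 1) x) / x ^ (2 * n)) (𝓝[≠] 0) (𝓝 0) := by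
  have hsq : Tendsto (fun x : ℝ => x ^ 2) (𝓝[≠] 0) (𝓝 0) := by
    simpa using ((continuous_pow 2).tendsto (0 : ℝ)).mono_left nhdsWithin_le_nhds
  refine squeeze_zero_norm' ?_ hsq
  filter_upwards [self_mem_nhdsWithin, nhdsWithin_le_nhds (Ioo_mem_nhds neg_one_lt_zero one_pos)]
    with x (hx0 : x ≠ 0) hx1
  have hpos : 0 < |x| ^ (2 * n) := pow_pos (abs_pos.mpr hx0) _
  rw [Real.norm_eq_abs, abs_div, abs_pow, div_le_iff₀ hpos]
  calc |Real.cos x - cosTaylor (n + 1) x| ≤ |x| ^ (2 * (n + 1)) :=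
        abs_cos_sub_cosTaylor_le (abs_le.mpr ⟨hx1.1.le, hx1.2.le⟩) n.succ_pos
    _ = x ^ 2 * |x| ^ (2 * n) := by rw [mul_add, pow_add, mul_one, sq_abs, mul_comm]

theorem cosTaylor_seven (x : ℝ) :
    cosTaylor 7 x = 1 - x^2/2 + x^4/24 - x^6/720 + x^8/40320 - x^10/3628800 + x^12/479001600 := by
  simp [cosTaylor, sum_range_succ, Nat.factorial]
  ring

theorem tendsto_add_mul_nhdsNE_zero {p q E : ℝ → ℝ} (hp : Continuous p) (hq : Continuous q)
    (hE : Tendsto E (𝓝[≠] 0) (𝓝 0)) :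
    Tendsto (fun v => p v + q v * E v) (𝓝[≠] 0) (𝓝 (p 0)) := by
  have hp' := (hp.tendsto 0).mono_left (nhdsWithin_le_nhds (s := {0}ᶜ))
  have hq' := (hq.tendsto 0).mono_left (nhdsWithin_le_nhds (s := {0}ᶜ))
  simpa using hp'.add (hq'.mul hE)

noncomputable def beta11Num (v : ℝ) : ℝ :=
  45360*v^2*Real.cos v + 16998*v^4 - 850*v^6 + 37*v^6*Real.cos v
    - 90720 + 90720*Real.cos v + 1902*v^4*Real.cos v

noncomputable def beta11Den (v : ℝ) : ℝ :=
  15120*Real.cos v - 15120 + 6900*v^2 - 313*v^4 + 660*v^2*Real.cos v + 13*v^4*Real.cos v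

theorem tendsto_beta11Num_div_pow :
    Tendsto (fun v => beta11Num v / v ^ 12) (𝓝[≠] 0) (𝓝 (-(733 / 44352))) := by
  have h := tendsto_add_mul_nhdsNE_zero
    (p := fun v => -733/44352 + 29/59400*v^2 - 71/11404800*v^4 + 37/479001600*v^6)
    (q := fun v => 90720 + 45360*v^2 + 1902*v^4 + 37*v^6) (by fun_prop) (by fun_prop)
    (tendsto_cos_sub_cosTaylor_div_pow 6)
  norm_num at h
  refine h.congr' (eventually_nhdsWithin_of_forall fun v (hv : v ≠ 0) => ?_)
  beta_reduce
  generalize hE : (Real.cos v - cosTaylor 7 v) / v ^ 12 = E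
  have hcos : Real.cos v = cosTaylor 7 v + v ^ 12 * E := by
    rw [← hE, mul_div_cancel₀ _ (pow_ne_zero 12 hv)]
    ring
  rw [beta11Num, hcos, cosTaylor_seven]
  field_simp
  ring

theorem tendsto_beta11Den_div_pow :
    Tendsto (fun v => beta11Den v / v ^ 10) (𝓝[≠] 0) (𝓝 (-(59 / 10080))) := by
  have h := tendsto_add_mul_nhdsNE_zero
    (p := fun v => -59/10080 + 229/1330560*v^2 - 1/453600*v^4 + 13/479001600*v^6)
    (q := fun v => v^2 * (15120 + 660*v^2 + 13*v^4)) (by fun_prop) (by fun_prop)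
    (tendsto_cos_sub_cosTaylor_div_pow 6)
  norm_num at h
  refine h.congr' (eventually_nhdsWithin_of_forall fun v (hv : v ≠ 0) => ?_)
  beta_reduce
  generalize hE : (Real.cos v - cosTaylor 7 v) / v ^ 12 = E
  have hcos : Real.cos v = cosTaylor 7 v + v ^ 12 * E := by
    rw [← hE, mul_div_cancel₀ _ (pow_ne_zero 12 hv)]
    ring
  rw [beta11Den, hcos, cosTaylor_seven]
  field_simp
  ring

/-- The PL′ coefficient `β₁₁(v)` tends to the classical value `3665/3894`
as the fitting frequency parameter `v → 0`. -/
theorem beta11_limit :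
    Tendsto (fun v : ℝ =>
      (1/(3*v^2)) *
        ((45360*v^2*Real.cos v + 16998*v^4 - 850*v^6 + 37*v^6*Real.cos v
            - 90720 + 90720*Real.cos v + 1902*v^4*Real.cos v) /
          (15120*Real.cos v - 15120 + 6900*v^2 - 313*v^4
            + 660*v^2*Real.cos v + 13*v^4*Real.cos v)))
      (nhdsWithin 0 {0}ᶜ) (nhds (3665/3894)) := by
  change Tendsto (fun v => 1 / (3 * v ^ 2) * (beta11Num v / beta11Den v)) (𝓝[≠] 0) _
  have h := tendsto_beta11Num_div_pow.div (tendsto_beta11Den_div_pow.const_mul 3) (by norm_num)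
  rw [show (-(733 / 44352) : ℝ) / (3 * -(59 / 10080)) = 3665/3894 by norm_num] at h
  refine h.congr' (eventually_nhdsWithin_of_forall fun v (hv : v ≠ 0) => ?_)
  -- when `beta11Den v = 0`, both sides are `0` through `x / 0 = 0`
  rcases eq_or_ne (beta11Den v) 0 with hA | hA
  · simp [hA]
  · simp only [Pi.div_apply]
    field_simp
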